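/- arXiv:1601.03380 — 3 statements merged into one kernel-verified Lean document; each statement's English description precedes it below -/
import Mathlib

section
/- Let λ have strictly positive off-diagonal entries and let K = R^d_+ + M be the solvency cone. Then the efficient friction condition holds: K ∩ (−K) = {0}. -/
/-- The set of positions convertible to zero by a nonnegative transfer matrix `L`
under proportional transaction costs `lam`. -/
def transferCone {d : ℕ} (lam : Fin d → Fin d → ℝ) : Set (Fin d → ℝ) :=
  {x | ∃ L : Fin d → Fin d → ℝ, (∀ i j, 0 ≤ L i j) ∧ (∀ i, L i i = 0) ∧
    ∀ i, x i = (∑ j, (1 + lam i j) * L i j) - ∑ j, L j i}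

/-- The solvency cone `K = ℝ^d_+ + M`. -/
def solvencyCone {d : ℕ} (lam : Fin d → Fin d → ℝ) : Set (Fin d → ℝ) :=
  {x | ∃ y z : Fin d → ℝ, (∀ i, 0 ≤ y i) ∧ z ∈ transferCone lam ∧ x = y + z}

lemma sum_transfer {d : ℕ} (lam L : Fin d → Fin d → ℝ) :
    ∑ i, ((∑ j, (1 + lam i j) * L i j) - ∑ j, L j i)
      = ∑ i, ∑ j, lam i j * L i j := by
  rw [Finset.sum_sub_distrib, Finset.sum_comm (f := fun i j => L j i)]
  simp [add_mul, Finset.sum_add_distrib]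

/-- with strictly positive off-diagonal transaction costs the
efficient friction condition holds: `K ∩ (−K) = {0}`. -/
theorem efficient_friction {d : ℕ} (lam : Fin d → Fin d → ℝ)
    (hlam : ∀ i j, i ≠ j → 0 < lam i j) (hdiag : ∀ i, lam i i = 0) :
    solvencyCone lam ∩ (-(solvencyCone lam)) = {0} := by
  ext x
  simp only [Set.mem_inter_iff, Set.mem_neg, Set.mem_singleton_iff]
  constructor
  · rintro ⟨⟨y1, z1, hy1, ⟨L1, hL1, hL1d, hz1⟩, hx1⟩,
           ⟨y2, z2, hy2, ⟨L2, hL2, hL2d, hz2⟩, hx2⟩⟩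
    have hterm : ∀ (L : Fin d → Fin d → ℝ), (∀ i j, 0 ≤ L i j) →
        ∀ i j : Fin d, 0 ≤ lam i j * L i j := by
      intro L hL i j
      by_cases h : i = j
      · subst h; simp [hdiag]
      · exact mul_nonneg (hlam i j h).le (hL i j)
    -- the grand total
    have hx1' : ∀ i, x i = y1 i + z1 i := fun i => congrFun hx1 i
    have hx2' : ∀ i, -x i = y2 i + z2 i := fun i => congrFun hx2 i
    have hsum : (∑ i, y1 i) + (∑ i, y2 i) + (∑ i, ∑ j, lam i j * L1 i j)
        + (∑ i, ∑ j, lam i j * L2 i j) = 0 := by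
      have h1 : ∑ i, z1 i = ∑ i, ∑ j, lam i j * L1 i j := by
        rw [← sum_transfer lam L1]; exact Finset.sum_congr rfl (fun i _ => hz1 i)
      have h2 : ∑ i, z2 i = ∑ i, ∑ j, lam i j * L2 i j := by
        rw [← sum_transfer lam L2]; exact Finset.sum_congr rfl (fun i _ => hz2 i)
      have e1 : ∑ i, x i = (∑ i, y1 i) + (∑ i, z1 i) := by
        rw [← Finset.sum_add_distrib]
        exact Finset.sum_congr rfl (fun i _ => hx1' i)
      have e2 : ∑ i, -x i = (∑ i, y2 i) + (∑ i, z2 i) := by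
        rw [← Finset.sum_add_distrib]
        exact Finset.sum_congr rfl (fun i _ => hx2' i)
      have e3 : ∑ i, -x i = -∑ i, x i := by simp
      rw [h1] at e1; rw [h2] at e2
      linarith
    have hA : 0 ≤ ∑ i, y1 i := Finset.sum_nonneg (fun i _ => hy1 i)
    have hB : 0 ≤ ∑ i, y2 i := Finset.sum_nonneg (fun i _ => hy2 i)
    have hC : 0 ≤ ∑ i, ∑ j, lam i j * L1 i j :=
      Finset.sum_nonneg (fun i _ => Finset.sum_nonneg (fun j _ => hterm L1 hL1 i j))
    have hD : 0 ≤ ∑ i, ∑ j, lam i j * L2 i j :=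
      Finset.sum_nonneg (fun i _ => Finset.sum_nonneg (fun j _ => hterm L2 hL2 i j))
    have hAz : ∑ i, y1 i = 0 := by linarith
    have hCz : ∑ i, ∑ j, lam i j * L1 i j = 0 := by linarith
    -- y1 vanishes
    have hy1z : ∀ i, y1 i = 0 := by
      intro i
      have := (Finset.sum_eq_zero_iff_of_nonneg (fun i _ => hy1 i)).mp hAz
      exact this i (Finset.mem_univ i)
    -- L1 vanishes
    have hL1z : ∀ i j, L1 i j = 0 := by
      intro i j
      have hrow := (Finset.sum_eq_zero_iff_of_nonneg
        (fun i _ => Finset.sum_nonneg (fun j _ => hterm L1 hL1 i j))).mp hCz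
        i (Finset.mem_univ i)
      have hent := (Finset.sum_eq_zero_iff_of_nonneg
        (fun j _ => hterm L1 hL1 i j)).mp hrow j (Finset.mem_univ j)
      by_cases h : i = j
      · subst h; exact hL1d i
      · exact (mul_eq_zero.mp hent).resolve_left (hlam i j h).ne'
    have hz1z : ∀ i, z1 i = 0 := by
      intro i
      rw [hz1 i]
      simp [hL1z]
    funext i
    rw [hx1' i, hy1z i, hz1z i, add_zero]
    rfl
  · rintro rfl
    have h0 : (0 : Fin d → ℝ) ∈ solvencyCone lam := by
      refine ⟨0, 0, fun i => le_refl 0, ⟨0, fun i j => le_refl 0, fun i => rfl, ?_⟩, by simp⟩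
      intro i; simp
    exact ⟨h0, by simpa using h0⟩
end

section
/- Let (Ω,F,P) be a probability space and R = { φ : Ω → [0,1] measurable }. Let Z be a nonempty family of pairs (z₀, ζ) with z₀ ∈ R^d and ζ : Ω → R^d bounded measurable with nonnegative components, and let H : Ω → R^d be a bounded measurable random vector with nonnegative components. Define Γ(G) = { v ∈ R^d : ⟨z₀, v⟩ ≥ E[⟨ζ, G⟩] for all (z₀,ζ) ∈ Z } for each bounded claim G. Fix v₀ with 0 ∈ {φ ∈ R : v₀ ∈ Γ(Hφ)}. Then there exists φ̃ ∈ R with v₀ ∈ Γ(Hφ̃) maximizing E[φ] over { φ ∈ R : v₀ ∈ Γ(Hφ) } (attainment of the supremum). -/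
/-!
Through the Riesz isomorphism, view the candidate functions in `L²(P)` as a subset of the weak-*
dual of `L²(P)`. There the pointwise bounds `0 ≤ φ ≤ 1` (tested against indicators of sets) and
each constraint `E⟨ζ, Hφ⟩ ≤ ⟨z₀, v₀⟩` are weak-* closed conditions, and the set is norm-bounded, so
it is weak-* compact by Banach–Alaoglu. Since `E[φ] = ⟪φ, 1⟫` is weak-* continuous it attains its
maximum, and clamping a representative of the maximiser to `[0, 1]` gives the success function.
-/

open MeasureTheory Set
open scoped RealInnerProductSpace

section Hilbert

variable {E : Type*} [NormedAddCommGroup E] [InnerProductSpace ℝ E] [CompleteSpace E]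

noncomputable def rieszWeakDual : E ≃ WeakDual ℝ E :=
  (InnerProductSpace.toDual ℝ E).toLinearEquiv.toEquiv.trans StrongDual.toWeakDual.toEquiv

theorem isClosed_rieszWeakDual_image_setOf_inner_le (g : E) (c : ℝ) :
    IsClosed (rieszWeakDual '' {x : E | ⟪x, g⟫ ≤ c}) := by
  change IsClosed (rieszWeakDual '' (rieszWeakDual ⁻¹' {T | T g ≤ c}))
  rw [rieszWeakDual.surjective.image_preimage]
  exact isClosed_le (WeakDual.eval_continuous g) continuous_const

theorem exists_forall_inner_le_of_isClosed_image {s : Set E} (hb : Bornology.IsBounded s)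
    (hc : IsClosed (rieszWeakDual '' s)) (hne : s.Nonempty) (ℓ : E) :
    ∃ x ∈ s, ∀ y ∈ s, ⟪y, ℓ⟫ ≤ ⟪x, ℓ⟫ := by
  have hK : IsCompact (rieszWeakDual '' s) :=
    WeakDual.isCompact_of_bounded_of_closed
      ((InnerProductSpace.toDual ℝ E).lipschitz.isBounded_image hb) hc
  obtain ⟨_, ⟨x, hx, rfl⟩, hmax⟩ :=
    hK.exists_isMaxOn (hne.image _) (WeakDual.eval_continuous ℓ).continuousOn
  exact ⟨x, hx, fun y hy => hmax (mem_image_of_mem _ hy)⟩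

end Hilbert

section L2

variable {α : Type*} [MeasurableSpace α] {μ : Measure α}

theorem L2.inner_eq_integral_mul_of_ae_eq {f g : Lp ℝ 2 μ} {u v : α → ℝ}
    (hf : f =ᵐ[μ] u) (hg : g =ᵐ[μ] v) : ⟪f, g⟫ = ∫ x, u x * v x ∂μ := by
  rw [L2.inner_def]
  refine integral_congr_ae ?_
  filter_upwards [hf, hg] with x hfx hgx
  simp [hfx, hgx, mul_comm]

theorem integral_sum_mul_mul_eq_inner {d : ℕ} {ζ H : α → Fin d → ℝ}
    (hG : MemLp (fun x => ∑ i, ζ x i * H x i) 2 μ) {f : Lp ℝ 2 μ} {u : α → ℝ}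
    (hf : f =ᵐ[μ] u) : ∫ x, ∑ i, ζ x i * (u x * H x i) ∂μ = ⟪f, hG.toLp _⟫ := by
  rw [L2.inner_eq_integral_mul_of_ae_eq hf hG.coeFn_toLp]
  simp only [Finset.mul_sum, mul_left_comm]

variable [IsFiniteMeasure μ]

theorem memLp_of_measurable_of_mem_Icc {u : α → ℝ} (hu : Measurable u)
    (h01 : ∀ x, u x ∈ Icc (0 : ℝ) 1) (p : ENNReal) : MemLp u p μ :=
  MemLp.of_bound hu.aestronglyMeasurable 1 <| ae_of_all _ fun x =>
    abs_le.2 ⟨(neg_nonpos.2 zero_le_one).trans (h01 x).1, (h01 x).2⟩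

theorem memLp_sum_mul_of_abs_le {d : ℕ} {ζ H : α → Fin d → ℝ} (hζ : Measurable ζ)
    (hH : Measurable H) {C C' : ℝ} (hζC : ∀ x i, |ζ x i| ≤ C) (hHC : ∀ x i, |H x i| ≤ C')
    (p : ENNReal) : MemLp (fun x => ∑ i, ζ x i * H x i) p μ :=
  memLp_finsetSum _ fun i _ =>
    MemLp.of_bound (hζ.eval.mul hH.eval).aestronglyMeasurable (C * C') <| ae_of_all _ fun x => by
      rw [Real.norm_eq_abs, abs_mul]
      exact mul_le_mul (hζC x i) (hHC x i) (abs_nonneg _) ((abs_nonneg _).trans (hζC x i))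

theorem ae_mem_Icc_iff_forall_inner_indicatorConstLp (f : Lp ℝ 2 μ) :
    (∀ᵐ x ∂μ, f x ∈ Icc (0 : ℝ) 1) ↔ ∀ s (hs : MeasurableSet s) (hμs : μ s ≠ ⊤),
      ⟪f, indicatorConstLp 2 hs hμs (1 : ℝ)⟫ ∈ Icc 0 (μ.real s) := by
  have hf : Integrable f μ := (Lp.memLp f).integrable one_le_two
  simp_rw [real_inner_comm _ f, L2.inner_indicatorConstLp_one]
  constructor
  · intro h01 s hs _
    refine ⟨setIntegral_nonneg_of_ae_restrict (ae_restrict_of_ae (h01.mono fun x hx => hx.1)), ?_⟩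
    calc ∫ x in s, f x ∂μ ≤ ∫ _ in s, (1 : ℝ) ∂μ :=
          setIntegral_mono_ae hf.integrableOn (integrableOn_const (measure_ne_top μ s))
            (h01.mono fun x hx => hx.2)
      _ = μ.real s := by simp
  · intro h
    have h0 : 0 ≤ᵐ[μ] f := ae_nonneg_of_forall_setIntegral_nonneg hf fun s hs hμs =>
      (h s hs hμs.ne).1
    have h1 : ⇑f ≤ᵐ[μ] fun _ => (1 : ℝ) := ae_le_of_forall_setIntegral_le hf (integrable_const 1)
      fun s hs hμs => by simpa using (h s hs hμs.ne).2
    filter_upwards [h0, h1] with x h0x h1x using ⟨h0x, h1x⟩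

theorem isClosed_rieszWeakDual_image_ae_mem_Icc :
    IsClosed (rieszWeakDual '' {f : Lp ℝ 2 μ | ∀ᵐ x ∂μ, f x ∈ Icc (0 : ℝ) 1}) := by
  have : {f : Lp ℝ 2 μ | ∀ᵐ x ∂μ, f x ∈ Icc (0 : ℝ) 1} = rieszWeakDual ⁻¹'
      ⋂ (s) (hs : MeasurableSet s) (hμs : μ s ≠ ⊤),
        {T | T (indicatorConstLp 2 hs hμs (1 : ℝ)) ∈ Icc 0 (μ.real s)} := by
    ext f
    simp only [mem_preimage, mem_iInter]
    exact ae_mem_Icc_iff_forall_inner_indicatorConstLp f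
  rw [this, rieszWeakDual.surjective.image_preimage]
  exact isClosed_iInter fun s => isClosed_iInter fun hs => isClosed_iInter fun hμs =>
    isClosed_Icc.preimage (WeakDual.eval_continuous _)

theorem isBounded_setOf_ae_mem_Icc :
    Bornology.IsBounded {f : Lp ℝ 2 μ | ∀ᵐ x ∂μ, f x ∈ Icc (0 : ℝ) 1} :=
  isBounded_iff_forall_norm_le.2 ⟨_, fun _ hf => Lp.norm_le_of_ae_bound zero_le_one <|
    Filter.Eventually.mono hf fun _ hx =>
      abs_le.2 ⟨(neg_nonpos.2 zero_le_one).trans hx.1, hx.2⟩⟩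

end L2

theorem exists_optimal_success_function_general {d : ℕ} {Ω : Type*} [MeasureSpace Ω]
    [IsProbabilityMeasure (volume : Measure Ω)]
    (H : Ω → Fin d → ℝ) (hHmeas : Measurable H)
    (CH : ℝ) (hHbd : ∀ ω i, |H ω i| ≤ CH)
    (Z : Set ((Fin d → ℝ) × (Ω → Fin d → ℝ)))
    (hZmeas : ∀ p ∈ Z, Measurable p.2)
    (hZbd : ∀ p ∈ Z, ∃ C : ℝ, ∀ ω i, |p.2 ω i| ≤ C)
    (v₀ : Fin d → ℝ)
    (hv₀ : ∀ p ∈ Z, (0 : ℝ) ≤ ∑ i, p.1 i * v₀ i) :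
    ∃ φ : Ω → ℝ, Measurable φ ∧ (∀ ω, φ ω ∈ Set.Icc (0 : ℝ) 1) ∧
      (∀ p ∈ Z, ∫ ω, ∑ i, p.2 ω i * (φ ω * H ω i) ≤ ∑ i, p.1 i * v₀ i) ∧
      ∀ ψ : Ω → ℝ, Measurable ψ → (∀ ω, ψ ω ∈ Set.Icc (0 : ℝ) 1) →
        (∀ p ∈ Z, ∫ ω, ∑ i, p.2 ω i * (ψ ω * H ω i) ≤ ∑ i, p.1 i * v₀ i) →
        ∫ ω, ψ ω ≤ ∫ ω, φ ω := by
  have hG (p : Z) : MemLp (fun ω => ∑ i, p.1.2 ω i * H ω i) 2 volume :=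
    (hZbd p p.2).elim fun _ hC => memLp_sum_mul_of_abs_le (hZmeas p p.2) hHmeas hC hHbd 2
  have h_one {f : Lp ℝ 2 (volume : Measure Ω)} {u : Ω → ℝ} (hf : f =ᵐ[volume] u) :
      ∫ ω, u ω = ⟪f, Lp.const 2 volume (1 : ℝ)⟫ := by
    simp [L2.inner_eq_integral_mul_of_ae_eq hf (Lp.coeFn_const 2 volume (1 : ℝ))]
  set S : Set (Lp ℝ 2 (volume : Measure Ω)) := {f | ∀ᵐ ω, f ω ∈ Icc (0 : ℝ) 1} ∩
    ⋂ p : Z, {f | ⟪f, (hG p).toLp _⟫ ≤ ∑ i, p.1.1 i * v₀ i}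
  have hS_closed : IsClosed (rieszWeakDual '' S) := by
    rw [image_inter rieszWeakDual.injective, image_iInter rieszWeakDual.bijective]
    exact isClosed_rieszWeakDual_image_ae_mem_Icc.inter
      (isClosed_iInter fun p => isClosed_rieszWeakDual_image_setOf_inner_le _ _)
  have h0S : 0 ∈ S := by
    refine ⟨(Lp.coeFn_zero ℝ 2 volume).mono fun ω h => ?_, mem_iInter.2 fun p => ?_⟩
    · rw [h]; simp
    · simpa using hv₀ p p.2
  obtain ⟨f, ⟨hf01 : ∀ᵐ ω, f ω ∈ Icc (0 : ℝ) 1, hfZ⟩, hfmax⟩ :=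
    exists_forall_inner_le_of_isClosed_image (isBounded_setOf_ae_mem_Icc.subset inter_subset_left)
      hS_closed ⟨0, h0S⟩ (Lp.const 2 volume (1 : ℝ))
  set φ : Ω → ℝ := fun ω => projIcc 0 1 zero_le_one (f ω)
  have hφf : f =ᵐ[volume] φ := hf01.mono fun ω h => by simp [φ, projIcc_of_mem _ h]
  refine ⟨φ, by fun_prop, fun ω => (projIcc 0 1 zero_le_one (f ω)).2, fun p hp => ?_, ?_⟩
  · rw [integral_sum_mul_mul_eq_inner (hG ⟨p, hp⟩) hφf]
    exact mem_iInter.1 hfZ ⟨p, hp⟩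
  · intro ψ hψ hψ01 hψZ
    have hψL2 := memLp_of_measurable_of_mem_Icc (μ := volume) hψ hψ01 2
    have hψS : hψL2.toLp ψ ∈ S := by
      refine ⟨hψL2.coeFn_toLp.mono fun ω h => h ▸ hψ01 ω, mem_iInter.2 fun p => ?_⟩
      rw [mem_ofPred_eq, ← integral_sum_mul_mul_eq_inner (hG p) hψL2.coeFn_toLp]
      exact hψZ p p.2
    rw [h_one hψL2.coeFn_toLp, h_one hφf]
    exact hfmax _ hψS

/-- existence of a success function `φ̃` maximizing effectiveness
`E[φ]` over all `φ ∈ R = {φ : Ω → [0,1] measurable}` with `v₀ ∈ Γ(Hφ)`, where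
`Γ(G) = { v : ⟨z₀,v⟩ ≥ E⟨ζ,G⟩ for all (z₀,ζ) ∈ Z }`. -/
theorem exists_optimal_success_function {d : ℕ} {Ω : Type*} [MeasureSpace Ω]
    [IsProbabilityMeasure (volume : Measure Ω)]
    (H : Ω → Fin d → ℝ) (hHmeas : Measurable H)
    (CH : ℝ) (hHbd : ∀ ω i, |H ω i| ≤ CH) (hHnn : ∀ ω i, 0 ≤ H ω i)
    (Z : Set ((Fin d → ℝ) × (Ω → Fin d → ℝ))) (hZne : Z.Nonempty)
    (hZmeas : ∀ p ∈ Z, Measurable p.2)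
    (hZbd : ∀ p ∈ Z, ∃ C : ℝ, ∀ ω i, |p.2 ω i| ≤ C)
    (hZnn : ∀ p ∈ Z, ∀ ω i, 0 ≤ p.2 ω i)
    (v₀ : Fin d → ℝ)
    (hv₀ : ∀ p ∈ Z, (0 : ℝ) ≤ ∑ i, p.1 i * v₀ i) :
    ∃ φ : Ω → ℝ, Measurable φ ∧ (∀ ω, φ ω ∈ Set.Icc (0 : ℝ) 1) ∧
      (∀ p ∈ Z, ∫ ω, ∑ i, p.2 ω i * (φ ω * H ω i) ≤ ∑ i, p.1 i * v₀ i) ∧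
      ∀ ψ : Ω → ℝ, Measurable ψ → (∀ ω, ψ ω ∈ Set.Icc (0 : ℝ) 1) →
        (∀ p ∈ Z, ∫ ω, ∑ i, p.2 ω i * (ψ ω * H ω i) ≤ ∑ i, p.1 i * v₀ i) →
        ∫ ω, ψ ω ≤ ∫ ω, φ ω :=
  exists_optimal_success_function_general H hHmeas CH hHbd Z hZmeas hZbd v₀ hv₀
end

section
/- Komlós-type lemma: Let (X_n) be a sequence of [0,∞)-valued random variables on a probability space. Then there exists a sequence X̃_n with X̃_n ∈ conv{X_n, X_{n+1}, ...} (finite convex combinations) such that X̃_n converges almost surely to a [0,∞]-valued random variable. -/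
/-!
For `f ≥ 0` let `E f = ∫ exp (-f) ^ 2`. Since `exp (-(f + g) / 2) ^ 2 = exp (-f) * exp (-g)`,
`‖exp (-f) - exp (-g)‖₂ ^ 2 = E f + E g - 2 E ((f + g) / 2)`. The infima `β n` of `E` over the
tail hulls increase to a limit `b`. Choose `f n` in the `n`-th hull with `E (f n)` close to
`β n`; the midpoint of `f n` and `f m` lies in the `min n m`-th hull, so
`‖exp (-f n) - exp (-f m)‖₂ ^ 2` is at most about `2 (b - β (min n m))`. Hence `exp (-f n)` is
Cauchy in `L²`, a subsequence converges a.e., and convergence of `exp (-x)` forces convergence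
of `x` in `[0, ∞]`.
-/

open MeasureTheory Filter Real Topology
open scoped ENNReal

lemma exists_sum_eq_of_mem_convexHull_image {𝕜 E ι : Type*} [Field 𝕜] [LinearOrder 𝕜]
    [IsStrictOrderedRing 𝕜] [AddCommGroup E] [Module 𝕜 E] {v : ι → E} {S : Set ι} {x : E}
    (hx : x ∈ convexHull 𝕜 (v '' S)) :
    ∃ (s : Finset ι) (a : ι → 𝕜), (∀ i ∈ s, i ∈ S) ∧ (∀ i, 0 ≤ a i) ∧
      ∑ i ∈ s, a i = 1 ∧ x = ∑ i ∈ s, a i • v i := by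
  classical
  obtain ⟨κ, _, w, z, hw0, hw1, hz, rfl⟩ := mem_convexHull_iff_exists_fintype.1 hx
  choose j hjS hjz using hz
  have hmaps : ∀ k ∈ Finset.univ, j k ∈ Finset.univ.image j := fun k _ =>
    Finset.mem_image_of_mem j (Finset.mem_univ k)
  refine ⟨Finset.univ.image j, fun i => ∑ k with j k = i, w k, ?_, ?_, ?_, ?_⟩
  · simp only [Finset.mem_image, Finset.mem_univ, true_and]
    rintro _ ⟨k, rfl⟩
    exact hjS k
  · exact fun i => Finset.sum_nonneg fun k _ => hw0 k
  · rw [Finset.sum_fiberwise_of_maps_to hmaps, hw1]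
  · rw [← Finset.sum_fiberwise_of_maps_to hmaps]
    refine Finset.sum_congr rfl fun i _ => ?_
    rw [Finset.sum_smul]
    refine Finset.sum_congr rfl fun k hk => ?_
    rw [← (Finset.mem_filter.1 hk).2, hjz]

lemma convex_setOf_measurable_nonneg {Ω : Type*} [MeasurableSpace Ω] :
    Convex ℝ {f : Ω → ℝ | Measurable f ∧ 0 ≤ f} := by
  rintro f ⟨hf, hf0⟩ g ⟨hg, hg0⟩ a b ha hb -
  exact ⟨(hf.const_smul a).add (hg.const_smul b),
    add_nonneg (smul_nonneg ha hf0) (smul_nonneg hb hg0)⟩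

lemma abs_exp_neg_le_one {x : ℝ} (hx : 0 ≤ x) : |exp (-x)| ≤ 1 := by
  rwa [abs_of_pos (exp_pos _), exp_le_one_iff, neg_nonpos]

lemma exists_tendsto_ofReal_of_tendsto_exp_neg {α : Type*} {l : Filter α} [l.NeBot]
    {x : α → ℝ} {L : ℝ} (h : Tendsto (fun a => exp (-x a)) l (𝓝 L)) :
    ∃ T : ℝ≥0∞, Tendsto (fun a => ENNReal.ofReal (x a)) l (𝓝 T) := by
  rcases (ge_of_tendsto' h fun a => (exp_pos _).le).eq_or_lt with rfl | hL
  · refine ⟨⊤, ENNReal.tendsto_ofReal_atTop.comp ?_⟩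
    exact tendsto_neg_atBot_iff.1 (Real.tendsto_exp_comp_nhds_zero.1 h)
  · refine ⟨ENNReal.ofReal (-log L), (ENNReal.continuous_ofReal.tendsto _).comp ?_⟩
    have hlog := ((continuousAt_log hL.ne').tendsto.comp h).neg
    simpa only [Function.comp_def, log_exp, neg_neg] using hlog

section L2

variable {Ω : Type*} [MeasurableSpace Ω] {μ : Measure Ω}

lemma MeasureTheory.MemLp.norm_toLp_sq {f : Ω → ℝ} (hf : MemLp f 2 μ) :
    ‖hf.toLp f‖ ^ 2 = ∫ ω, f ω ^ 2 ∂μ := by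
  rw [← real_inner_self_eq_norm_sq, L2.inner_def]
  refine integral_congr_ae (hf.coeFn_toLp.mono fun ω hω => ?_)
  simp only [hω, real_inner_self_eq_norm_sq, Real.norm_eq_abs, sq_abs]

lemma exists_subseq_ae_tendsto_of_tendsto_integral_sq_sub {g : ℕ → Ω → ℝ}
    (hg : ∀ n, MemLp (g n) 2 μ)
    (hcauchy : Tendsto (fun p : ℕ × ℕ => ∫ ω, (g p.1 ω - g p.2 ω) ^ 2 ∂μ) atTop (𝓝 0)) :
    ∃ ns : ℕ → ℕ, StrictMono ns ∧ ∀ᵐ ω ∂μ, ∃ l, Tendsto (fun i => g (ns i) ω) atTop (𝓝 l) := by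
  set G : ℕ → Lp ℝ 2 μ := fun n => (hg n).toLp
  have hdist : ∀ n m, dist (G n) (G m) = √(∫ ω, (g n ω - g m ω) ^ 2 ∂μ) := fun n m => by
    rw [dist_eq_norm, ← MemLp.toLp_sub, ← sqrt_sq (norm_nonneg _),
      ((hg n).sub (hg m)).norm_toLp_sq]
    rfl
  have hG : CauchySeq G := by
    rw [cauchySeq_iff_tendsto_dist_atTop_0]
    simpa only [hdist, sqrt_zero] using hcauchy.sqrt
  obtain ⟨Glim, hGlim⟩ := cauchySeq_tendsto_of_complete hG
  obtain ⟨ns, hns, hae⟩ := (tendstoInMeasure_of_tendsto_Lp hGlim).exists_seq_tendsto_ae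
  refine ⟨ns, hns, ?_⟩
  filter_upwards [hae, ae_all_iff.2 fun n => (hg n).coeFn_toLp] with ω hω hcoe
  exact ⟨_, by simpa only [G, hcoe] using hω⟩

end L2

section Energy

variable {Ω : Type*} [MeasurableSpace Ω] {μ : Measure Ω}

variable (μ) in
noncomputable def expEnergy (f : Ω → ℝ) : ℝ := ∫ ω, exp (-f ω) ^ 2 ∂μ

lemma expEnergy_nonneg (f : Ω → ℝ) : 0 ≤ expEnergy μ f :=
  integral_nonneg fun _ => sq_nonneg _

lemma sq_exp_neg_sub_exp_neg (x y : ℝ) :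
    (exp (-x) - exp (-y)) ^ 2 =
      exp (-x) ^ 2 + exp (-y) ^ 2 - 2 * exp (-((1 / 2 : ℝ) * x + (1 / 2 : ℝ) * y)) ^ 2 := by
  have hmid : exp (-((1 / 2 : ℝ) * x + (1 / 2 : ℝ) * y)) ^ 2 = exp (-x) * exp (-y) := by
    rw [sq, ← exp_add, ← exp_add]
    ring_nf
  rw [hmid]
  ring

variable [IsFiniteMeasure μ]

lemma memLp_exp_neg {f : Ω → ℝ} (hf : Measurable f) (hf0 : 0 ≤ f) (p : ℝ≥0∞) :
    MemLp (fun ω => exp (-f ω)) p μ :=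
  .of_bound (measurable_exp.comp hf.neg).aestronglyMeasurable 1
    (ae_of_all _ fun ω => abs_exp_neg_le_one (hf0 ω))

lemma expEnergy_le_measureReal_univ {f : Ω → ℝ} (hf : Measurable f) (hf0 : 0 ≤ f) :
    expEnergy μ f ≤ μ.real Set.univ := by
  calc expEnergy μ f ≤ ∫ _, (1 : ℝ) ∂μ :=
        integral_mono (memLp_exp_neg hf hf0 2).integrable_sq (integrable_const 1) fun ω =>
          (sq_le_one_iff_abs_le_one _).2 (abs_exp_neg_le_one (hf0 ω))
    _ = μ.real Set.univ := by simp

lemma integral_sq_exp_neg_sub {f g : Ω → ℝ} (hf : Measurable f) (hf0 : 0 ≤ f)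
    (hg : Measurable g) (hg0 : 0 ≤ g) :
    ∫ ω, (exp (-f ω) - exp (-g ω)) ^ 2 ∂μ =
      expEnergy μ f + expEnergy μ g - 2 * expEnergy μ ((1 / 2 : ℝ) • f + (1 / 2 : ℝ) • g) := by
  obtain ⟨hmid, hmid0⟩ := convex_setOf_measurable_nonneg ⟨hf, hf0⟩ ⟨hg, hg0⟩
    (by norm_num : (0 : ℝ) ≤ 1 / 2) (by norm_num : (0 : ℝ) ≤ 1 / 2) (by norm_num)
  have hif := (memLp_exp_neg (μ := μ) hf hf0 2).integrable_sq
  have hig := (memLp_exp_neg (μ := μ) hg hg0 2).integrable_sq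
  have him := (memLp_exp_neg (μ := μ) hmid hmid0 2).integrable_sq
  simp_rw [sq_exp_neg_sub_exp_neg]
  rw [integral_sub, integral_add hif hig, integral_const_mul]
  · rfl
  · exact hif.add hig
  · exact him.const_mul 2

end Energy

section TailInfimum

variable {Ω : Type*} [MeasurableSpace Ω] {μ : Measure Ω} {C : ℕ → Set (Ω → ℝ)}

variable (μ C) in
noncomputable def tailInfEnergy (n : ℕ) : ℝ := sInf (expEnergy μ '' C n)

lemma bddBelow_image_expEnergy (s : Set (Ω → ℝ)) : BddBelow (expEnergy μ '' s) :=
  ⟨0, by rintro _ ⟨f, -, rfl⟩; exact expEnergy_nonneg f⟩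

lemma tailInfEnergy_le_expEnergy {n : ℕ} {f : Ω → ℝ} (hf : f ∈ C n) :
    tailInfEnergy μ C n ≤ expEnergy μ f :=
  csInf_le (bddBelow_image_expEnergy _) ⟨f, hf, rfl⟩

lemma monotone_tailInfEnergy (hC : Antitone C) (hne : ∀ n, (C n).Nonempty) :
    Monotone (tailInfEnergy μ C) := fun _ m hnm =>
  csInf_le_csInf (bddBelow_image_expEnergy _) ((hne m).image _) (Set.image_mono (hC hnm))

lemma exists_expEnergy_lt_tailInfEnergy_add {n : ℕ} (hne : (C n).Nonempty) {ε : ℝ}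
    (hε : 0 < ε) : ∃ f ∈ C n, expEnergy μ f < tailInfEnergy μ C n + ε := by
  obtain ⟨_, ⟨f, hf, rfl⟩, hlt⟩ := Real.lt_sInf_add_pos (hne.image (expEnergy μ)) hε
  exact ⟨f, hf, hlt⟩

variable [IsFiniteMeasure μ]

lemma tendsto_tailInfEnergy (hC : Antitone C) (hne : ∀ n, (C n).Nonempty)
    (hsub : ∀ n, C n ⊆ {f | Measurable f ∧ 0 ≤ f}) :
    Tendsto (tailInfEnergy μ C) atTop (𝓝 (⨆ n, tailInfEnergy μ C n)) := by
  refine tendsto_atTop_ciSup (monotone_tailInfEnergy hC hne) ⟨μ.real Set.univ, ?_⟩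
  rintro _ ⟨n, rfl⟩
  obtain ⟨f, hf⟩ := hne n
  exact (tailInfEnergy_le_expEnergy hf).trans
    (expEnergy_le_measureReal_univ (hsub n hf).1 (hsub n hf).2)

lemma integral_sq_exp_neg_sub_le (hC : Antitone C) (hconv : ∀ n, Convex ℝ (C n))
    (hsub : ∀ n, C n ⊆ {f | Measurable f ∧ 0 ≤ f}) {n m : ℕ} {f g : Ω → ℝ}
    (hf : f ∈ C n) (hg : g ∈ C m) :
    ∫ ω, (exp (-f ω) - exp (-g ω)) ^ 2 ∂μ ≤
      expEnergy μ f + expEnergy μ g - 2 * tailInfEnergy μ C (min n m) := by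
  have hmid : (1 / 2 : ℝ) • f + (1 / 2 : ℝ) • g ∈ C (min n m) :=
    hconv _ (hC (min_le_left n m) hf) (hC (min_le_right n m) hg) (by norm_num) (by norm_num)
      (by norm_num)
  rw [integral_sq_exp_neg_sub (hsub n hf).1 (hsub n hf).2 (hsub m hg).1 (hsub m hg).2]
  linarith [tailInfEnergy_le_expEnergy (μ := μ) hmid]

lemma exists_tendsto_integral_sq_exp_neg_sub (hC : Antitone C) (hconv : ∀ n, Convex ℝ (C n))
    (hne : ∀ n, (C n).Nonempty) (hsub : ∀ n, C n ⊆ {f | Measurable f ∧ 0 ≤ f}) :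
    ∃ f : ℕ → Ω → ℝ, (∀ n, f n ∈ C n) ∧
      Tendsto (fun p : ℕ × ℕ => ∫ ω, (exp (-f p.1 ω) - exp (-f p.2 ω)) ^ 2 ∂μ) atTop (𝓝 0) := by
  have hβ := tendsto_tailInfEnergy (μ := μ) hC hne hsub
  set b := ⨆ n, tailInfEnergy μ C n
  have hβb : ∀ n, tailInfEnergy μ C n ≤ b := (monotone_tailInfEnergy hC hne).ge_of_tendsto hβ
  choose f hfC hfE using fun n : ℕ => exists_expEnergy_lt_tailInfEnergy_add (μ := μ) (hne n)
    (Nat.one_div_pos_of_nat (n := n))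
  refine ⟨f, hfC, ?_⟩
  set δ : ℕ → ℝ := fun N => 2 * (b - tailInfEnergy μ C N + 1 / (N + 1))
  have hδ : Tendsto δ atTop (𝓝 0) := by
    simpa [δ] using (((tendsto_const_nhds (x := b)).sub hβ).add
      tendsto_one_div_add_atTop_nhds_zero_nat).const_mul (2 : ℝ)
  have hmin : Tendsto (fun p : ℕ × ℕ => min p.1 p.2) atTop atTop :=
    tendsto_atTop_atTop.2 fun N => ⟨(N, N), fun p hp => le_min hp.1 hp.2⟩
  refine squeeze_zero (fun p => integral_nonneg fun ω => sq_nonneg _) (fun ⟨n, m⟩ => ?_)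
    (hδ.comp hmin)
  have hn := Nat.one_div_le_one_div (α := ℝ) (min_le_left n m)
  have hm := Nat.one_div_le_one_div (α := ℝ) (min_le_right n m)
  have hsq := integral_sq_exp_neg_sub_le (μ := μ) hC hconv hsub (hfC n) (hfC m)
  simp only [Function.comp_apply, δ]
  linarith [hfE n, hfE m, hβb n, hβb m]

end TailInfimum

section Abstract

variable {Ω : Type*} [MeasurableSpace Ω] {μ : Measure Ω} [IsFiniteMeasure μ]
  {C : ℕ → Set (Ω → ℝ)}

theorem exists_ae_tendsto_ofReal_of_antitone_convex (hC : Antitone C)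
    (hconv : ∀ n, Convex ℝ (C n)) (hne : ∀ n, (C n).Nonempty)
    (hsub : ∀ n, C n ⊆ {f | Measurable f ∧ 0 ≤ f}) :
    ∃ Y : ℕ → Ω → ℝ, (∀ n, Y n ∈ C n) ∧ ∃ Ylim : Ω → ℝ≥0∞, Measurable Ylim ∧
      ∀ᵐ ω ∂μ, Tendsto (fun n => ENNReal.ofReal (Y n ω)) atTop (𝓝 (Ylim ω)) := by
  obtain ⟨f, hfC, hcauchy⟩ := exists_tendsto_integral_sq_exp_neg_sub (μ := μ) hC hconv hne hsub
  obtain ⟨ns, hns, hae⟩ := exists_subseq_ae_tendsto_of_tendsto_integral_sq_sub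
    (fun n => memLp_exp_neg (hsub n (hfC n)).1 (hsub n (hfC n)).2 2) hcauchy
  refine ⟨fun i => f (ns i), fun i => hC (hns.id_le i) (hfC (ns i)),
    measurable_limit_of_tendsto_metrizable_ae
      (fun i => (ENNReal.measurable_ofReal.comp (hsub _ (hfC (ns i))).1).aemeasurable) ?_⟩
  filter_upwards [hae] with ω ⟨l, hl⟩
  exact exists_tendsto_ofReal_of_tendsto_exp_neg hl

end Abstract

/-- Komlós-type lemma: for any sequence of `[0,∞)`-valued random
variables `X_n` there are finite convex combinations `X̃_n ∈ conv{X_n, X_{n+1}, …}`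
converging almost surely to a `[0,∞]`-valued random variable. -/
theorem komlos_type_lemma {Ω : Type*} [MeasureSpace Ω]
    [IsProbabilityMeasure (volume : Measure Ω)]
    (X : ℕ → Ω → ℝ) (hXmeas : ∀ n, Measurable (X n)) (hXnn : ∀ n ω, 0 ≤ X n ω) :
    ∃ Y : ℕ → Ω → ℝ,
      (∀ n, ∃ (s : Finset ℕ) (a : ℕ → ℝ), (∀ m ∈ s, n ≤ m) ∧ (∀ m, 0 ≤ a m) ∧
        (∑ m ∈ s, a m) = 1 ∧ Y n = fun ω => ∑ m ∈ s, a m * X m ω) ∧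
      ∃ Ylim : Ω → ENNReal, Measurable Ylim ∧
        ∀ᵐ ω, Tendsto (fun n => ENNReal.ofReal (Y n ω)) atTop (nhds (Ylim ω)) := by
  set C : ℕ → Set (Ω → ℝ) := fun n => convexHull ℝ (X '' Set.Ici n)
  have hsub : ∀ n, C n ⊆ {f | Measurable f ∧ 0 ≤ f} := fun n =>
    convexHull_min (by rintro _ ⟨m, -, rfl⟩; exact ⟨hXmeas m, hXnn m⟩)
      convex_setOf_measurable_nonneg
  obtain ⟨Y, hYC, hlim⟩ := exists_ae_tendsto_ofReal_of_antitone_convex (μ := volume) (C := C)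
    (fun n m hnm => convexHull_mono (Set.image_mono (Set.Ici_subset_Ici.2 hnm)))
    (fun n => convex_convexHull ℝ _)
    (fun n => ⟨X n, subset_convexHull ℝ _ ⟨n, Set.mem_Ici.2 le_rfl, rfl⟩⟩) hsub
  refine ⟨Y, fun n => ?_, hlim⟩
  obtain ⟨s, a, hs, ha, ha1, hY⟩ := exists_sum_eq_of_mem_convexHull_image (hYC n)
  exact ⟨s, a, hs, ha, ha1, by ext ω; simp [hY, Finset.sum_apply]⟩
end
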